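/- (Lemma 3.1, concrete form) Let n ≥ 1 and let v, v' : Fin (n+1) → ℝⁿ each be affinely independent (so they are vertex tuples of n-simplices in ℝⁿ). The following are equivalent: (i) there exist real numbers u(0), …, u(n) such that dist(v'(i), v'(j)) = exp((u(i)+u(j))/2)·dist(v(i), v(j)) for all i ≠ j; (ii) there exist λ > 0 and a surjective map F : ℝⁿ → ℝⁿ with dist(F x, F y) = λ·dist(x, y) for all x, y, such that F(inv_{v(0),1}(v(i))) = inv_{v'(0),1}(v'(i)) for all i ≠ 0. -/

import Mathlib

/-- Inversion in the sphere of center `p` and radius `R`. -/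
noncomputable def sphInv {n : ℕ} (p : EuclideanSpace ℝ (Fin n)) (R : ℝ)
    (x : EuclideanSpace ℝ (Fin n)) : EuclideanSpace ℝ (Fin n) :=
  p + (R ^ 2 / (dist x p) ^ 2) • (x - p)

open Function Real EuclideanGeometry RealInnerProductSpace

lemma sphInv_eq_inversion {n : ℕ} (p : EuclideanSpace ℝ (Fin n)) (R : ℝ)
    (x : EuclideanSpace ℝ (Fin n)) :
    sphInv p R x = EuclideanGeometry.inversion p R x := by
  simp only [sphInv, EuclideanGeometry.inversion, vsub_eq_sub, vadd_eq_add, div_pow]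
  abel

/-- Any finite family of points in `ℝⁿ` related by a dilation of distances is related by a
global similarity transformation. -/
lemma exists_similarity_extension {n : ℕ} (hn : 0 < n)
    (a b : Fin n → EuclideanSpace ℝ (Fin n)) {lam : ℝ} (hlam : 0 < lam)
    (h : ∀ i j, dist (b i) (b j) = lam * dist (a i) (a j)) :
    ∃ F : EuclideanSpace ℝ (Fin n) → EuclideanSpace ℝ (Fin n), Surjective F ∧
      (∀ x y, dist (F x) (F y) = lam * dist x y) ∧ ∀ i, F (a i) = b i := by
  haveI : NeZero n := ⟨hn.ne'⟩
  set x : Fin n → EuclideanSpace ℝ (Fin n) := fun i => a i - a 0 with hx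
  set y : Fin n → EuclideanSpace ℝ (Fin n) := fun i => lam⁻¹ • (b i - b 0) with hy
  have hnorm : ∀ i j, ‖x i - x j‖ = ‖y i - y j‖ := by
    intro i j
    have h1 : x i - x j = a i - a j := by rw [hx]; simp only [sub_sub_sub_cancel_right]
    have h2 : y i - y j = lam⁻¹ • (b i - b j) := by rw [hy]; rw [← smul_sub]; congr 1; abel
    rw [h1, h2, norm_smul, Real.norm_eq_abs, abs_of_pos (inv_pos.2 hlam), ← dist_eq_norm,
      ← dist_eq_norm, h i j]
    field_simp
  have hnorm' : ∀ i, ‖x i‖ = ‖y i‖ := by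
    intro i
    have := hnorm i 0
    simpa [hx, hy] using this
  have hinner : ∀ i j, (inner ℝ (x i) (x j) : ℝ) = (inner ℝ (y i) (y j) : ℝ) := by
    intro i j
    have h1 := norm_sub_sq_real (x i) (x j)
    have h2 := norm_sub_sq_real (y i) (y j)
    rw [hnorm i j] at h1
    rw [hnorm' i, hnorm' j] at h1
    linarith
  set Φ : (Fin n → ℝ) →ₗ[ℝ] EuclideanSpace ℝ (Fin n) := Fintype.linearCombination ℝ x with hΦ
  set Ψ : (Fin n → ℝ) →ₗ[ℝ] EuclideanSpace ℝ (Fin n) := Fintype.linearCombination ℝ y with hΨ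
  have hΦΨ : ∀ c c', (inner ℝ (Φ c) (Φ c') : ℝ) = (inner ℝ (Ψ c) (Ψ c') : ℝ) := by
    intro c c'
    rw [hΦ, hΨ]
    simp only [Fintype.linearCombination_apply, sum_inner, inner_sum, real_inner_smul_left,
      real_inner_smul_right]
    exact Finset.sum_congr rfl fun i _ => Finset.sum_congr rfl fun j _ => by rw [hinner]
  have hker : ∀ c, Φ c = 0 → Ψ c = 0 := by
    intro c hc
    have : (inner ℝ (Ψ c) (Ψ c) : ℝ) = 0 := by rw [← hΦΨ, hc, inner_zero_left]
    exact inner_self_eq_zero.1 this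
  set S : Submodule ℝ (EuclideanSpace ℝ (Fin n)) := LinearMap.range Φ with hS
  obtain ⟨σ, hσ⟩ := Φ.rangeRestrict.exists_rightInverse_of_surjective
    (LinearMap.range_eq_top.2 Φ.surjective_rangeRestrict)
  have hΦσ : ∀ s : S, Φ (σ s) = (s : EuclideanSpace ℝ (Fin n)) := by
    intro s
    have h1 : Φ.rangeRestrict (σ s) = s := by
      rw [← LinearMap.comp_apply, hσ, LinearMap.id_apply]
    have := congrArg Subtype.val h1
    simpa using this
  have hΨσΦ : ∀ c, Ψ (σ ⟨Φ c, LinearMap.mem_range_self Φ c⟩) = Ψ c := by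
    intro c
    have h0 : Φ (σ ⟨Φ c, LinearMap.mem_range_self Φ c⟩ - c) = 0 := by
      rw [map_sub, hΦσ]; simp
    have := hker _ h0
    rw [map_sub, sub_eq_zero] at this
    exact this
  have hLnorm : ∀ s : S, ‖(Ψ.comp σ) s‖ = ‖s‖ := by
    intro s
    have h1 : (‖Ψ (σ s)‖ : ℝ) ^ 2 = ‖(s : EuclideanSpace ℝ (Fin n))‖ ^ 2 := by
      rw [← real_inner_self_eq_norm_sq, ← real_inner_self_eq_norm_sq, ← hΦΨ, hΦσ]
    have h2 := congrArg Real.sqrt h1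
    rw [Real.sqrt_sq (norm_nonneg _), Real.sqrt_sq (norm_nonneg _)] at h2
    simpa using h2
  set L : S →ₗᵢ[ℝ] EuclideanSpace ℝ (Fin n) := ⟨Ψ.comp σ, hLnorm⟩ with hL
  set T : EuclideanSpace ℝ (Fin n) →ₗᵢ[ℝ] EuclideanSpace ℝ (Fin n) := L.extend with hT
  have hTΦ : ∀ c, T (Φ c) = Ψ c := by
    intro c
    have h1 : T ((⟨Φ c, LinearMap.mem_range_self Φ c⟩ : S) : EuclideanSpace ℝ (Fin n))
        = L ⟨Φ c, LinearMap.mem_range_self Φ c⟩ := L.extend_apply _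
    simpa [hL, hΨσΦ c] using h1
  have hTx : ∀ i, T (x i) = y i := by
    intro i
    classical
    have h1 : Φ (Pi.single i 1) = x i := by
      rw [hΦ]
      rw [Fintype.linearCombination_apply]
      simp [Pi.single_apply, Finset.sum_ite_eq']
    have h2 : Ψ (Pi.single i 1) = y i := by
      rw [hΨ]
      rw [Fintype.linearCombination_apply]
      simp [Pi.single_apply, Finset.sum_ite_eq']
    rw [← h1, hTΦ, h2]
  have hTsurj : Surjective T := by
    have hinj : Injective T.toLinearMap := T.injective
    exact (LinearMap.injective_iff_surjective.1 hinj)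
  refine ⟨fun z => b 0 + lam • T (z - a 0), ?_, ?_, ?_⟩
  · intro w
    obtain ⟨z, hz⟩ := hTsurj (lam⁻¹ • (w - b 0))
    refine ⟨a 0 + z, ?_⟩
    simp only [add_sub_cancel_left, hz, smul_smul, mul_inv_cancel₀ hlam.ne', one_smul]
    abel
  · intro z w
    have h1 : (b 0 + lam • T (z - a 0)) - (b 0 + lam • T (w - a 0))
        = lam • (T (z - a 0) - T (w - a 0)) := by rw [smul_sub]; abel
    rw [dist_eq_norm, h1, norm_smul, Real.norm_eq_abs, abs_of_pos hlam, ← T.map_sub]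
    have h2 : (z - a 0) - (w - a 0) = z - w := by abel
    rw [h2, T.norm_map, ← dist_eq_norm]
  · intro i
    show b 0 + lam • T (a i - a 0) = b i
    have hxi : a i - a 0 = x i := rfl
    rw [hxi, hTx i]
    simp only [hy, smul_smul, mul_inv_cancel₀ hlam.ne', one_smul]
    abel

/-- Lemma 3.1, concrete form: two `n`-simplices in `ℝⁿ` are discretely conformally
equivalent iff their vertices are related by a Möbius transformation, written concretely as
`inv_{v' 0, 1} ∘ F ∘ inv_{v 0, 1}` with `F` a similarity. -/
theorem conformal_iff_mobius_for_simplices {n : ℕ} (hn : 1 ≤ n)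
    (v v' : Fin (n + 1) → EuclideanSpace ℝ (Fin n))
    (hv : AffineIndependent ℝ v) (hv' : AffineIndependent ℝ v') :
    (∃ u : Fin (n + 1) → ℝ, ∀ i j, i ≠ j →
        dist (v' i) (v' j) = Real.exp ((u i + u j) / 2) * dist (v i) (v j)) ↔
    (∃ lam : ℝ, 0 < lam ∧
      ∃ F : EuclideanSpace ℝ (Fin n) → EuclideanSpace ℝ (Fin n), Function.Surjective F ∧
        (∀ x y, dist (F x) (F y) = lam * dist x y) ∧
        ∀ i, i ≠ 0 → F (sphInv (v 0) 1 (v i)) = sphInv (v' 0) 1 (v' i)) := by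
  have hvne : ∀ i : Fin (n + 1), i ≠ 0 → v i ≠ v 0 := fun i hi e => hi (hv.injective e)
  have hv'ne : ∀ i : Fin (n + 1), i ≠ 0 → v' i ≠ v' 0 := fun i hi e => hi (hv'.injective e)
  have hd : ∀ i : Fin (n + 1), i ≠ 0 → 0 < dist (v i) (v 0) :=
    fun i hi => dist_pos.2 (hvne i hi)
  have hd' : ∀ i : Fin (n + 1), i ≠ 0 → 0 < dist (v' i) (v' 0) :=
    fun i hi => dist_pos.2 (hv'ne i hi)
  have hinvd : ∀ (w : Fin (n + 1) → EuclideanSpace ℝ (Fin n))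
      (hw : ∀ i : Fin (n + 1), i ≠ 0 → w i ≠ w 0) (i j : Fin (n + 1)), i ≠ 0 → j ≠ 0 →
      dist (sphInv (w 0) 1 (w i)) (sphInv (w 0) 1 (w j))
        = dist (w i) (w j) / (dist (w i) (w 0) * dist (w j) (w 0)) := by
    intro w hw i j hi hj
    rw [sphInv_eq_inversion, sphInv_eq_inversion,
      EuclideanGeometry.dist_inversion_inversion (hw i hi) (hw j hj)]
    rw [one_pow, div_mul_eq_mul_div, one_mul]
  constructor
  · rintro ⟨u, hu⟩
    set lam : ℝ := Real.exp (-u 0) with hlamdef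
    have hlam : 0 < lam := Real.exp_pos _
    set a : Fin n → EuclideanSpace ℝ (Fin n) := fun i => sphInv (v 0) 1 (v i.succ) with ha
    set b : Fin n → EuclideanSpace ℝ (Fin n) := fun i => sphInv (v' 0) 1 (v' i.succ) with hb
    have key : ∀ i j : Fin n, dist (b i) (b j) = lam * dist (a i) (a j) := by
      intro i j
      by_cases hij : i = j
      · subst hij; simp
      have hsucc : (i.succ : Fin (n + 1)) ≠ j.succ := fun e => hij (Fin.succ_injective n e)
      have hi0 : (i.succ : Fin (n + 1)) ≠ 0 := Fin.succ_ne_zero i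
      have hj0 : (j.succ : Fin (n + 1)) ≠ 0 := Fin.succ_ne_zero j
      rw [ha, hb]
      rw [hinvd v hvne i.succ j.succ hi0 hj0, hinvd v' hv'ne i.succ j.succ hi0 hj0]
      rw [hu i.succ j.succ hsucc, hu i.succ 0 hi0, hu j.succ 0 hj0]
      have hdi := hd i.succ hi0
      have hdj := hd j.succ hj0
      have he1 : (0:ℝ) < Real.exp ((u i.succ + u 0) / 2) := Real.exp_pos _
      have he2 : (0:ℝ) < Real.exp ((u j.succ + u 0) / 2) := Real.exp_pos _
      have hexp : Real.exp ((u i.succ + u j.succ) / 2)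
          = lam * (Real.exp ((u i.succ + u 0) / 2) * Real.exp ((u j.succ + u 0) / 2)) := by
        rw [hlamdef, ← Real.exp_add, ← Real.exp_add]
        congr 1
        ring
      rw [hexp]
      field_simp
    obtain ⟨F, hFsurj, hFdist, hFab⟩ := exists_similarity_extension hn a b hlam key
    refine ⟨lam, hlam, F, hFsurj, hFdist, ?_⟩
    intro i hi
    obtain ⟨j, rfl⟩ := Fin.exists_succ_eq_of_ne_zero hi
    exact hFab j
  · rintro ⟨lam, hlam, F, hFsurj, hFdist, hFab⟩
    classical
    refine ⟨fun i => if i = 0 then -Real.log lam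
      else Real.log (lam * (dist (v' i) (v' 0) / dist (v i) (v 0)) ^ 2), ?_⟩
    have hgen : ∀ j : Fin (n + 1), j ≠ 0 →
        Real.exp ((-Real.log lam
          + Real.log (lam * (dist (v' j) (v' 0) / dist (v j) (v 0)) ^ 2)) / 2)
          = dist (v' j) (v' 0) / dist (v j) (v 0) := by
      intro j hj
      have hq : (0:ℝ) < dist (v' j) (v' 0) / dist (v j) (v 0) :=
        div_pos (hd' j hj) (hd j hj)
      have hl : Real.log ((dist (v' j) (v' 0) / dist (v j) (v 0)) ^ 2)
          = 2 * Real.log (dist (v' j) (v' 0) / dist (v j) (v 0)) := by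
        rw [Real.log_pow]; push_cast; ring
      rw [Real.log_mul hlam.ne' (by positivity), hl]
      have : (-Real.log lam + (Real.log lam + 2 * Real.log (dist (v' j) (v' 0) / dist (v j) (v 0)))) / 2
          = Real.log (dist (v' j) (v' 0) / dist (v j) (v 0)) := by ring
      rw [this, Real.exp_log hq]
    intro i j hij
    by_cases hi : i = 0
    · subst hi
      have hj : j ≠ 0 := fun e => hij e.symm
      simp only [eq_self_iff_true, if_true, if_neg hj]
      rw [hgen j hj]
      rw [dist_comm (v' 0) (v' j), dist_comm (v 0) (v j)]
      field_simp [(hd j hj).ne']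
    by_cases hj : j = 0
    · subst hj
      simp only [eq_self_iff_true, if_true, if_neg hi]
      rw [add_comm (Real.log (lam * (dist (v' i) (v' 0) / dist (v i) (v 0)) ^ 2))
        (-Real.log lam), hgen i hi]
      field_simp [(hd i hi).ne']
    · simp only [if_neg hi, if_neg hj]
      have hAi : (0:ℝ) < lam * (dist (v' i) (v' 0) / dist (v i) (v 0)) ^ 2 := by
        have := div_pos (hd' i hi) (hd i hi); positivity
      have hAj : (0:ℝ) < lam * (dist (v' j) (v' 0) / dist (v j) (v 0)) ^ 2 := by
        have := div_pos (hd' j hj) (hd j hj); positivity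
      have hexp : Real.exp ((Real.log (lam * (dist (v' i) (v' 0) / dist (v i) (v 0)) ^ 2)
            + Real.log (lam * (dist (v' j) (v' 0) / dist (v j) (v 0)) ^ 2)) / 2)
          = lam * (dist (v' i) (v' 0) / dist (v i) (v 0))
            * (dist (v' j) (v' 0) / dist (v j) (v 0)) := by
        have hqi : (0:ℝ) < dist (v' i) (v' 0) / dist (v i) (v 0) :=
          div_pos (hd' i hi) (hd i hi)
        have hqj : (0:ℝ) < dist (v' j) (v' 0) / dist (v j) (v 0) :=
          div_pos (hd' j hj) (hd j hj)
        have hli : Real.log ((dist (v' i) (v' 0) / dist (v i) (v 0)) ^ 2)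
            = 2 * Real.log (dist (v' i) (v' 0) / dist (v i) (v 0)) := by
          rw [Real.log_pow]; push_cast; ring
        have hlj : Real.log ((dist (v' j) (v' 0) / dist (v j) (v 0)) ^ 2)
            = 2 * Real.log (dist (v' j) (v' 0) / dist (v j) (v 0)) := by
          rw [Real.log_pow]; push_cast; ring
        rw [Real.log_mul hlam.ne' (by positivity), Real.log_mul hlam.ne' (by positivity),
          hli, hlj]
        have : ((Real.log lam + 2 * Real.log (dist (v' i) (v' 0) / dist (v i) (v 0)))
            + (Real.log lam + 2 * Real.log (dist (v' j) (v' 0) / dist (v j) (v 0)))) / 2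
            = Real.log lam + Real.log (dist (v' i) (v' 0) / dist (v i) (v 0))
              + Real.log (dist (v' j) (v' 0) / dist (v j) (v 0)) := by ring
        rw [this, Real.exp_add, Real.exp_add, Real.exp_log hlam, Real.exp_log hqi,
          Real.exp_log hqj]
      rw [hexp]
      -- use the similarity relation on inverted points
      have hF := hFab i hi
      have hF' := hFab j hj
      have hdist : dist (sphInv (v' 0) 1 (v' i)) (sphInv (v' 0) 1 (v' j))
          = lam * dist (sphInv (v 0) 1 (v i)) (sphInv (v 0) 1 (v j)) := by
        rw [← hF, ← hF']; exact hFdist _ _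
      rw [hinvd v hvne i j hi hj, hinvd v' hv'ne i j hi hj] at hdist
      have hdi := hd i hi
      have hdj := hd j hj
      have hdi' := hd' i hi
      have hdj' := hd' j hj
      field_simp at hdist ⊢
      nlinarith [hdist, mul_pos hdi hdj, mul_pos hdi' hdj']
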